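/- (Stochastic swap-regret bound.) Let Λ := Δ^{m̃}, ℳ the set of left-stochastic m̃×m̃ matrices, and f₁,…,f_T : Λ → ℝ concave. Starting from M^(1) with all entries 1/m̃ and with step size η := √(m̃ ln m̃/(T B_ĝ²)), perform T iterations: λ^(t) := a stationary distribution of M^(t) (M^(t) λ^(t) = λ^(t)); A^(t) := ĝ^(t) (λ^(t))ᵀ, where ĝ^(t) is an adapted random vector whose conditional expectation given the past is a supergradient of f_t at λ^(t), with ‖ĝ^(t)‖_∞ ≤ B_ĝ almost surely; M̃^(t+1) = M^(t) ⊙ exp(η A^(t)) element-wise; and M^(t+1) is M̃^(t+1) with each column normalized to sum to 1. Then for every M* ∈ ℳ, with probability at least 1−δ over the draws of the stochastic supergradients: (1/T) Σ_{t=1}^T f_t(M* λ^(t)) − (1/T) Σ_{t=1}^T f_t(λ^(t)) ≤ 2 B_ĝ √(2 (m̃ ln m̃)(1 + 16 ln(1/δ)) / T). -/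

import Mathlib

/-!
Write `ĝₜ` for the conditional expectation of `gₜ` given `ℱₜ`. The supergradient inequality at
`M* λₜ` bounds the regret at step `t` by `⟨ĝₜ, M* λₜ - λₜ⟩`, which splits into the realised gain
`⟨gₜ, M* λₜ - λₜ⟩` plus a martingale difference `Zₜ` with `|Zₜ| ≤ 4B`.

The update runs Hedge separately on every column `j` of `M`, with gain vector `η λₜ(j) gₜ`.
Against the potential `∑ⱼ ∑ᵢ M*ᵢⱼ log Mₜ(i, j)`, which starts at `-m log m` and stays `≤ 0`,
each step gains at least `η ⟨gₜ, M* λₜ⟩ - η ⟨gₜ, Mₜ λₜ⟩ - η² B²`, and stationarity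
`Mₜ λₜ = λₜ` turns the middle term into `η ⟨gₜ, λₜ⟩`. With the given `η` the realised gains sum
to at most `2 B √(T m log m)`.

A conditional Hoeffding lemma makes `∑ₜ Zₜ` sub-Gaussian with variance proxy `16 B² T`
(Azuma–Hoeffding), so `∑ₜ Zₜ < 4 B √(2 T log (1/δ))` with probability at least `1 - δ`, and
`√a + √b ≤ √(2 (a + b))` combines the two terms. The step-size analysis needs `η B ≤ 1`, i.e.
`m log m ≤ T`; this holds unless the claimed bound is at least `2 B`, which already bounds every
`⟨ĝₜ, M* λₜ - λₜ⟩`. For `m ≤ 1` every column-stochastic matrix fixes the simplex.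
-/

open MeasureTheory ProbabilityTheory Real Finset Matrix
open scoped NNReal

section SwapGain

variable {ι : Type*} [Fintype ι] {M : Matrix ι ι ℝ} {g v : ι → ℝ} {B : ℝ}

def swapGain (M : Matrix ι ι ℝ) (g v : ι → ℝ) : ℝ := g ⬝ᵥ (M *ᵥ v - v)

lemma abs_dotProduct_le_of_mem_stdSimplex (hv : v ∈ stdSimplex ℝ ι) (hg : ∀ i, |g i| ≤ B) :
    |g ⬝ᵥ v| ≤ B := calc
  |g ⬝ᵥ v| ≤ ∑ i, |g i * v i| := abs_sum_le_sum_abs _ _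
  _ ≤ ∑ i, B * v i := sum_le_sum fun i _ => by
    rw [abs_mul, abs_of_nonneg (hv.1 i)]
    exact mul_le_mul_of_nonneg_right (hg i) (hv.1 i)
  _ = B := by rw [← mul_sum, hv.2, mul_one]

variable [DecidableEq ι]

lemma mulVec_mem_stdSimplex (hM : M ∈ colStochastic ℝ ι) (hv : v ∈ stdSimplex ℝ ι) :
    M *ᵥ v ∈ stdSimplex ℝ ι :=
  ⟨nonneg_mulVec_of_mem_colStochastic hM hv.1, (sum_mulVec_of_mem_colStochastic hM).trans hv.2⟩

lemma mulVec_eq_self_of_subsingleton [Subsingleton ι] (hM : M ∈ colStochastic ℝ ι) :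
    M *ᵥ v = v := by
  ext i
  rw [mulVec, dotProduct, Fintype.sum_subsingleton _ i, ← Fintype.sum_subsingleton (M · i) i,
    sum_col_of_mem_colStochastic hM, one_mul]

lemma abs_mulVec_sub_le_one (hM : M ∈ colStochastic ℝ ι) (hv : v ∈ stdSimplex ℝ ι) (i : ι) :
    |(M *ᵥ v - v) i| ≤ 1 := by
  obtain ⟨h₁, h₁'⟩ := mem_Icc_of_mem_stdSimplex (mulVec_mem_stdSimplex hM hv) i
  obtain ⟨h₂, h₂'⟩ := mem_Icc_of_mem_stdSimplex hv i
  exact abs_sub_le_of_nonneg_of_le h₁ h₁' h₂ h₂'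

lemma abs_swapGain_le (hM : M ∈ colStochastic ℝ ι) (hv : v ∈ stdSimplex ℝ ι)
    (hg : ∀ i, |g i| ≤ B) : |swapGain M g v| ≤ 2 * B := by
  rw [swapGain, dotProduct_sub]
  linarith [abs_sub (g ⬝ᵥ (M *ᵥ v)) (g ⬝ᵥ v),
    abs_dotProduct_le_of_mem_stdSimplex (mulVec_mem_stdSimplex hM hv) hg,
    abs_dotProduct_le_of_mem_stdSimplex hv hg]

end SwapGain

section Hedge

variable {ι : Type*} [Fintype ι]

noncomputable def hedgeUpdate (p x : ι → ℝ) : ι → ℝ :=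
  fun i => p i * exp (x i) / ∑ k, p k * exp (x k)

variable {p q x : ι → ℝ}

lemma sum_mul_exp_pos [Nonempty ι] (hp : ∀ i, 0 < p i) : 0 < ∑ k, p k * exp (x k) :=
  sum_pos (fun k _ => mul_pos (hp k) (exp_pos _)) univ_nonempty

lemma hedgeUpdate_pos [Nonempty ι] (hp : ∀ i, 0 < p i) (i : ι) : 0 < hedgeUpdate p x i :=
  div_pos (mul_pos (hp i) (exp_pos _)) (sum_mul_exp_pos hp)

lemma sum_hedgeUpdate [Nonempty ι] (hp : ∀ i, 0 < p i) : ∑ i, hedgeUpdate p x i = 1 := by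
  simp only [hedgeUpdate]
  rw [← sum_div, div_self (sum_mul_exp_pos hp).ne']

lemma log_hedgeUpdate [Nonempty ι] (hp : ∀ i, 0 < p i) (i : ι) :
    log (hedgeUpdate p x i) = log (p i) + x i - log (∑ k, p k * exp (x k)) := by
  rw [hedgeUpdate, log_div (mul_pos (hp i) (exp_pos _)).ne' (sum_mul_exp_pos hp).ne',
    log_mul (hp i).ne' (exp_pos _).ne', log_exp]

/-- `exp y ≤ 1 + y + y²` on `[-1, 1]` and `log z ≤ z - 1`. -/
lemma log_sum_mul_exp_le [Nonempty ι] (hp : ∀ i, 0 < p i) (hp1 : ∑ i, p i = 1) {r : ℝ}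
    (hx : ∀ i, |x i| ≤ r) (hr : r ≤ 1) :
    log (∑ k, p k * exp (x k)) ≤ p ⬝ᵥ x + r ^ 2 := by
  have hexp : ∀ k, exp (x k) ≤ 1 + x k + r ^ 2 := fun k => by
    have h := abs_le.1 (abs_exp_sub_one_sub_id_le ((hx k).trans hr))
    nlinarith [sq_abs (x k), abs_nonneg (x k), hx k]
  have hsum : ∑ k, p k * exp (x k) ≤ 1 + p ⬝ᵥ x + r ^ 2 := calc
    ∑ k, p k * exp (x k) ≤ ∑ k, p k * (1 + x k + r ^ 2) :=
      sum_le_sum fun k _ => mul_le_mul_of_nonneg_left (hexp k) (hp k).le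
    _ = 1 + p ⬝ᵥ x + r ^ 2 := by
      simp only [mul_add, mul_one, sum_add_distrib, ← sum_mul, hp1, dotProduct, one_mul]
  linarith [log_le_sub_one_of_pos (sum_mul_exp_pos (x := x) hp)]

lemma sum_mul_log_hedgeUpdate_sub_ge [Nonempty ι] (hp : ∀ i, 0 < p i) (hp1 : ∑ i, p i = 1)
    (hq : q ∈ stdSimplex ℝ ι) {r : ℝ} (hx : ∀ i, |x i| ≤ r) (hr : r ≤ 1) :
    q ⬝ᵥ x - p ⬝ᵥ x - r ^ 2 ≤
      ∑ i, q i * log (hedgeUpdate p x i) - ∑ i, q i * log (p i) := by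
  have hlog : ∑ i, q i * log (hedgeUpdate p x i) =
      ∑ i, q i * log (p i) + q ⬝ᵥ x - log (∑ k, p k * exp (x k)) := by
    simp only [log_hedgeUpdate hp, mul_sub, mul_add, sum_sub_distrib, sum_add_distrib, ← sum_mul,
      hq.2, one_mul, dotProduct]
  linarith [log_sum_mul_exp_le hp hp1 hx hr]

lemma pos_and_sum_col_of_hedgeUpdate [Nonempty ι] {M : ℕ → Matrix ι ι ℝ} {x : ℕ → ι → ι → ℝ}
    {T : ℕ} (hinit : ∀ i j, M 0 i j = 1 / Fintype.card ι)
    (hupd : ∀ t < T, ∀ i j, M (t + 1) i j = hedgeUpdate (fun k => M t k j) (x t j) i) :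
    ∀ t ≤ T, (∀ i j, 0 < M t i j) ∧ ∀ j, ∑ i, M t i j = 1 := by
  intro t ht
  induction t with
  | zero =>
    simp only [hinit, one_div, inv_pos, Nat.cast_pos, Fintype.card_pos, implies_true, sum_const,
      card_univ, nsmul_eq_mul, true_and]
    intro j
    exact mul_inv_cancel₀ (Nat.cast_ne_zero.2 Fintype.card_ne_zero)
  | succ t ih =>
    obtain ⟨hpos, -⟩ := ih (Nat.le_of_succ_le ht)
    simp only [hupd t ht]
    exact ⟨fun i j => hedgeUpdate_pos (hpos · j) i, fun j => sum_hedgeUpdate (hpos · j)⟩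

end Hedge

section SwapRegret

lemma le_two_mul_sqrt_of_mul_le {η K B T S : ℝ} (hK : 0 < K) (hB : 0 < B) (hT : 0 < T)
    (hη : η = √(K / (T * B ^ 2))) (h : η * S ≤ K + η ^ 2 * B ^ 2 * T) :
    S ≤ 2 * B * √(T * K) := by
  have hη₀ : 0 < η := hη ▸ sqrt_pos.2 (by positivity)
  have hη₂ : η ^ 2 * B ^ 2 * T = K := by
    rw [hη, sq_sqrt (by positivity)]; field_simp
  have hηK : η * (B * √(T * K)) = K := by
    refine (pow_left_inj₀ (by positivity) hK.le two_ne_zero).1 ?_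
    rw [mul_pow, mul_pow, sq_sqrt (by positivity)]
    linear_combination K * hη₂
  refine le_of_mul_le_mul_left ?_ hη₀
  linarith

variable {ι : Type*} [Fintype ι]

noncomputable def swapPotential (M' N : Matrix ι ι ℝ) : ℝ := ∑ j, ∑ i, M' i j * log (N i j)

lemma sum_dotProduct_col_mul (A : Matrix ι ι ℝ) (g v : ι → ℝ) (c : ℝ) :
    ∑ j, (fun i => A i j) ⬝ᵥ (fun i => c * (g i * v j)) = c * (g ⬝ᵥ (A *ᵥ v)) := by
  simp only [dotProduct, mulVec, mul_sum]
  rw [sum_comm]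
  exact sum_congr rfl fun i _ => sum_congr rfl fun j _ => by ring

variable [DecidableEq ι] {M' N : Matrix ι ι ℝ}

lemma swapPotential_hedgeUpdate_sub_ge [Nonempty ι] (hM' : M' ∈ colStochastic ℝ ι)
    (hN : ∀ i j, 0 < N i j) (hN1 : ∀ j, ∑ i, N i j = 1) {v g : ι → ℝ} (hv : v ∈ stdSimplex ℝ ι)
    (hstat : N *ᵥ v = v) {B η : ℝ} (hg : ∀ i, |g i| ≤ B) (hη : 0 ≤ η) (hηB : η * B ≤ 1) :
    η * swapGain M' g v - η ^ 2 * B ^ 2 ≤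
      swapPotential M' (fun i j => hedgeUpdate (fun k => N k j) (fun k => η * (g k * v j)) i)
        - swapPotential M' N := by
  have hcol : ∀ j, (fun i => M' i j) ⬝ᵥ (fun i => η * (g i * v j))
      - (fun i => N i j) ⬝ᵥ (fun i => η * (g i * v j)) - (η * B * v j) ^ 2 ≤
      ∑ i, M' i j * log (hedgeUpdate (fun k => N k j) (fun k => η * (g k * v j)) i)
        - ∑ i, M' i j * log (N i j) := fun j => by
    refine sum_mul_log_hedgeUpdate_sub_ge (hN · j) (hN1 j)
      ⟨(hM'.1 · j), (mem_colStochastic_iff_sum.1 hM').2 j⟩ (fun i => ?_) ?_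
    · rw [abs_mul, abs_mul, abs_of_nonneg hη, abs_of_nonneg (hv.1 j), ← mul_assoc]
      exact mul_le_mul_of_nonneg_right (mul_le_mul_of_nonneg_left (hg i) hη) (hv.1 j)
    · simpa using mul_le_one₀ hηB (hv.1 j) (mem_Icc_of_mem_stdSimplex hv j).2
  have hsq : ∑ j, (η * B * v j) ^ 2 ≤ η ^ 2 * B ^ 2 := calc
    ∑ j, (η * B * v j) ^ 2 ≤ ∑ j, η ^ 2 * B ^ 2 * v j := sum_le_sum fun j _ => by
      rw [mul_pow, mul_pow]
      exact mul_le_mul_of_nonneg_left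
        (pow_le_of_le_one (hv.1 j) (mem_Icc_of_mem_stdSimplex hv j).2 two_ne_zero) (by positivity)
    _ = η ^ 2 * B ^ 2 := by rw [← mul_sum, hv.2, mul_one]
  have hsum := sum_le_sum fun j (_ : j ∈ univ) => hcol j
  rw [sum_sub_distrib, sum_sub_distrib, sum_dotProduct_col_mul, sum_dotProduct_col_mul,
    hstat, sum_sub_distrib] at hsum
  rw [swapGain, dotProduct_sub]
  simp only [swapPotential]
  linarith

lemma swapPotential_uniform (hM' : M' ∈ colStochastic ℝ ι) :
    swapPotential M' (fun _ _ => 1 / Fintype.card ι) =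
      -(Fintype.card ι * log (Fintype.card ι)) := by
  simp [swapPotential, ← sum_mul, (mem_colStochastic_iff_sum.1 hM').2]

lemma swapPotential_nonpos (hM' : M' ∈ colStochastic ℝ ι) (hN : ∀ i j, 0 < N i j)
    (hN1 : ∀ j, ∑ i, N i j = 1) : swapPotential M' N ≤ 0 :=
  sum_nonpos fun j _ => sum_nonpos fun i _ => mul_nonpos_of_nonneg_of_nonpos (hM'.1 i j) <|
    log_nonpos (hN i j).le <| (hN1 j) ▸ single_le_sum (fun k _ => (hN k j).le) (mem_univ i)

theorem mul_sum_swapGain_le_of_hedgeUpdate [Nonempty ι] (hM' : M' ∈ colStochastic ℝ ι)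
    {M : ℕ → Matrix ι ι ℝ} {g v : ℕ → ι → ℝ} {B η : ℝ} {T : ℕ}
    (hinit : ∀ i j, M 0 i j = 1 / Fintype.card ι)
    (hupd : ∀ t < T, ∀ i j,
      M (t + 1) i j = hedgeUpdate (fun k => M t k j) (fun k => η * (g t k * v t j)) i)
    (hv : ∀ t < T, v t ∈ stdSimplex ℝ ι) (hstat : ∀ t < T, M t *ᵥ v t = v t)
    (hg : ∀ t < T, ∀ i, |g t i| ≤ B) (hη : 0 ≤ η) (hηB : η * B ≤ 1) :
    η * ∑ t ∈ range T, swapGain M' (g t) (v t) ≤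
      Fintype.card ι * log (Fintype.card ι) + η ^ 2 * B ^ 2 * T := by
  have hcols := pos_and_sum_col_of_hedgeUpdate hinit hupd
  have hstep : ∀ t ∈ range T, η * swapGain M' (g t) (v t) - η ^ 2 * B ^ 2 ≤
      swapPotential M' (M (t + 1)) - swapPotential M' (M t) := fun t ht => by
    have ht := mem_range.1 ht
    obtain ⟨hpos, hsum⟩ := hcols t ht.le
    rw [show M (t + 1) = _ from funext₂ (hupd t ht)]
    exact swapPotential_hedgeUpdate_sub_ge hM' hpos hsum (hv t ht) (hstat t ht) (hg t ht) hη hηB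
  have hM0 : M 0 = fun _ _ => (1 / Fintype.card ι : ℝ) := funext fun i => funext (hinit i)
  have htel := sum_le_sum hstep
  rw [sum_range_sub (fun t => swapPotential M' (M t)), sum_sub_distrib, ← mul_sum, hM0,
    swapPotential_uniform hM', sum_const, card_range, nsmul_eq_mul] at htel
  linarith [swapPotential_nonpos hM' (hcols T le_rfl).1 (hcols T le_rfl).2]

theorem sum_swapGain_le_of_hedgeUpdate [Nonempty ι] (hM' : M' ∈ colStochastic ℝ ι)
    {M : ℕ → Matrix ι ι ℝ} {g v : ℕ → ι → ℝ} {B η : ℝ} {T : ℕ}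
    (hinit : ∀ i j, M 0 i j = 1 / Fintype.card ι)
    (hupd : ∀ t < T, ∀ i j,
      M (t + 1) i j = hedgeUpdate (fun k => M t k j) (fun k => η * (g t k * v t j)) i)
    (hv : ∀ t < T, v t ∈ stdSimplex ℝ ι) (hstat : ∀ t < T, M t *ᵥ v t = v t)
    (hg : ∀ t < T, ∀ i, |g t i| ≤ B) (hB : 0 < B)
    (hK : 0 < Fintype.card ι * log (Fintype.card ι))
    (hKT : Fintype.card ι * log (Fintype.card ι) ≤ T)
    (hη : η = √(Fintype.card ι * log (Fintype.card ι) / (T * B ^ 2))) :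
    ∑ t ∈ range T, swapGain M' (g t) (v t) ≤
      2 * B * √(T * (Fintype.card ι * log (Fintype.card ι))) := by
  have hT : (0 : ℝ) < T := hK.trans_le hKT
  have hη₀ : 0 ≤ η := hη ▸ sqrt_nonneg _
  have hηB : η * B ≤ 1 := by
    refine (sq_le_one_iff₀ (by positivity)).1 ?_
    rw [mul_pow, hη, sq_sqrt (by positivity), div_mul_eq_mul_div, div_le_one (by positivity)]
    exact mul_le_mul_of_nonneg_right hKT (sq_nonneg B)
  exact le_two_mul_sqrt_of_mul_le hK hB hT hη
    (mul_sum_swapGain_le_of_hedgeUpdate hM' hinit hupd hv hstat hg hη₀ hηB)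

end SwapRegret

section Azuma

lemma exp_mul_le_cosh_add_sinh {c x : ℝ} (hc : 0 < c) (hx : |x| ≤ c) (s : ℝ) :
    exp (s * x) ≤ cosh (s * c) + sinh (s * c) / c * x := by
  obtain ⟨hx₁, hx₂⟩ := abs_le.1 hx
  have ha : 0 ≤ (c - x) / (2 * c) := div_nonneg (by linarith) (by positivity)
  have hb : 0 ≤ (c + x) / (2 * c) := div_nonneg (by linarith) (by positivity)
  calc exp (s * x) = exp ((c - x) / (2 * c) * -(s * c) + (c + x) / (2 * c) * (s * c)) := by
        congr 1; field_simp; ring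
    _ ≤ (c - x) / (2 * c) * exp (-(s * c)) + (c + x) / (2 * c) * exp (s * c) :=
        convexOn_exp.2 (Set.mem_univ _) (Set.mem_univ _) ha hb (by field_simp; ring)
    _ = cosh (s * c) + sinh (s * c) / c * x := by
        simp only [cosh_eq, sinh_eq, exp_neg]; field_simp; ring

variable {Ω : Type*} {m m0 : MeasurableSpace Ω} {μ : Measure Ω} [IsFiniteMeasure μ]

lemma condExp_exp_mul_le (hm : m ≤ m0) {Z : Ω → ℝ} {c : ℝ} (hc : 0 < c)
    (hZ : AEStronglyMeasurable Z μ) (hbdd : ∀ᵐ ω ∂μ, |Z ω| ≤ c) (hmean : μ[Z|m] =ᵐ[μ] 0)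
    (s : ℝ) : μ[fun ω => exp (s * Z ω)|m] ≤ᵐ[μ] fun _ => exp (c ^ 2 * s ^ 2 / 2) := by
  have hZi : Integrable Z μ := Integrable.of_bound hZ c (by simpa only [norm_eq_abs])
  set H : Ω → ℝ := (fun _ => cosh (s * c)) + (sinh (s * c) / c) • Z
  have hHi : Integrable H μ := (integrable_const _).add (hZi.smul _)
  have hle : (fun ω => exp (s * Z ω)) ≤ᵐ[μ] H := by
    filter_upwards [hbdd] with ω hω
    exact exp_mul_le_cosh_add_sinh hc hω s
  have hexpi : Integrable (fun ω => exp (s * Z ω)) μ :=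
    hHi.mono' (by fun_prop) (by filter_upwards [hle] with ω hω; simpa [abs_of_pos (exp_pos _)])
  have hH : μ[H|m] =ᵐ[μ] fun _ => cosh (s * c) := by
    filter_upwards [condExp_add (integrable_const (cosh (s * c))) (hZi.smul (sinh (s * c) / c)) m,
      condExp_smul (sinh (s * c) / c) Z m, hmean] with ω h₁ h₂ h₃
    rw [h₁, Pi.add_apply, h₂, Pi.smul_apply, h₃, condExp_const hm]
    simp
  filter_upwards [condExp_mono (m := m) hexpi hHi hle, hH] with ω h₁ h₂
  calc _ ≤ cosh (s * c) := h₁.trans_eq h₂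
    _ ≤ _ := (cosh_le_exp_half_sq _).trans_eq (by ring_nf)

lemma integral_mul_le_of_condExp_le (hm : m ≤ m0) {F G : Ω → ℝ} {K : ℝ}
    (hF : StronglyMeasurable[m] F) (hF0 : ∀ ω, 0 ≤ F ω) (hFi : Integrable F μ)
    (hG : Integrable G μ) (hFG : Integrable (F * G) μ) (hGK : μ[G|m] ≤ᵐ[μ] fun _ => K) :
    ∫ ω, F ω * G ω ∂μ ≤ K * ∫ ω, F ω ∂μ := by
  have hpull : μ[F * G|m] =ᵐ[μ] F * μ[G|m] := condExp_mul_of_stronglyMeasurable_left hF hFG hG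
  calc ∫ ω, F ω * G ω ∂μ = ∫ ω, (F * μ[G|m]) ω ∂μ :=
        (integral_condExp hm).symm.trans (integral_congr_ae hpull)
    _ ≤ ∫ ω, F ω * K ∂μ := integral_mono_ae (integrable_condExp.congr hpull) (hFi.mul_const K)
        (by filter_upwards [hGK] with ω hω using mul_le_mul_of_nonneg_left hω (hF0 ω))
    _ = K * ∫ ω, F ω ∂μ := by rw [integral_mul_const, mul_comm]

lemma ProbabilityTheory.HasSubgaussianMGF.add_of_condExp_eq_zero [IsProbabilityMeasure μ]
    (hm : m ≤ m0) {X Y : Ω → ℝ} {cX c : ℝ≥0} (hX : HasSubgaussianMGF X cX μ)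
    (hXm : StronglyMeasurable[m] X) (hc : 0 < c) (hY : AEStronglyMeasurable Y μ)
    (hYc : ∀ᵐ ω ∂μ, |Y ω| ≤ c) (hY0 : μ[Y|m] =ᵐ[μ] 0) : HasSubgaussianMGF (fun ω => X ω + Y ω) (cX + c ^ 2) μ := by
  have hbdd : ∀ t, ∀ᵐ ω ∂μ, ‖exp (t * Y ω)‖ ≤ exp (|t| * c) := fun t => by
    filter_upwards [hYc] with ω hω
    rw [norm_of_nonneg (exp_pos _).le, exp_le_exp]
    exact (le_abs_self _).trans (abs_mul t (Y ω) ▸ mul_le_mul_of_nonneg_left hω (abs_nonneg t))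
  have hexpY : ∀ t, Integrable (fun ω => exp (t * Y ω)) μ := fun t =>
    Integrable.of_bound (by fun_prop) _ (hbdd t)
  have hsplit : ∀ t, (fun ω => exp (t * (X ω + Y ω))) =
      (fun ω => exp (t * X ω)) * fun ω => exp (t * Y ω) := fun t => by
    ext ω; simp [mul_add, exp_add]
  have hint : ∀ t, Integrable (fun ω => exp (t * (X ω + Y ω))) μ := fun t => by
    rw [hsplit]
    exact (hX.integrable_exp_mul t).mul_bdd (by fun_prop) (hbdd t)
  refine ⟨hint, fun t => ?_⟩
  calc mgf (fun ω => X ω + Y ω) μ t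
      ≤ exp (c ^ 2 * t ^ 2 / 2) * mgf X μ t := by
        rw [mgf, mgf, hsplit]
        exact integral_mul_le_of_condExp_le hm (by fun_prop) (fun ω => (exp_pos _).le)
          (hX.integrable_exp_mul t) (hexpY t) (hsplit t ▸ hint t)
          (condExp_exp_mul_le hm (by exact_mod_cast hc) hY hYc hY0 t)
    _ ≤ exp (c ^ 2 * t ^ 2 / 2) * exp (cX * t ^ 2 / 2) := by gcongr; exact hX.mgf_le t
    _ = exp (↑(cX + c ^ 2) * t ^ 2 / 2) := by rw [← exp_add]; push_cast; ring_nf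

/- Mathlib's `measure_sum_ge_le_of_hasCondSubgaussianMGF` needs a standard Borel sample space,
which is not available here. -/
theorem hasSubgaussianMGF_sum_of_condExp_eq_zero [IsProbabilityMeasure μ] {ℱ : Filtration ℕ m0}
    {Z : ℕ → Ω → ℝ} {c : ℝ≥0} {T : ℕ} (hc : 0 < c)
    (hZ : ∀ t < T, StronglyMeasurable[ℱ (t + 1)] (Z t)) (hbdd : ∀ t < T, ∀ᵐ ω ∂μ, |Z t ω| ≤ c)
    (hmean : ∀ t < T, μ[Z t|ℱ t] =ᵐ[μ] 0) :
    HasSubgaussianMGF (fun ω => ∑ t ∈ range T, Z t ω) (T * c ^ 2) μ := by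
  induction T with
  | zero => simp
  | succ n ih =>
    have hsum : StronglyMeasurable[ℱ n] fun ω => ∑ t ∈ range n, Z t ω :=
      (Finset.measurable_sum _ fun t ht => ((hZ t (by simp at ht; omega)).mono
        (ℱ.mono (mem_range.1 ht))).measurable).stronglyMeasurable
    simp only [sum_range_succ]
    convert (ih (fun t ht => hZ t (by omega)) (fun t ht => hbdd t (by omega))
      (fun t ht => hmean t (by omega))).add_of_condExp_eq_zero (ℱ.le n) hsum hc
      ((hZ n n.lt_succ_self).mono (ℱ.le _)).aestronglyMeasurable (hbdd n n.lt_succ_self)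
      (hmean n n.lt_succ_self) using 1
    push_cast; ring

lemma ProbabilityTheory.HasSubgaussianMGF.ofReal_one_sub_le_measure_lt [IsProbabilityMeasure μ]
    {X : Ω → ℝ} {c : ℝ≥0} (h : HasSubgaussianMGF X c μ) (hc : 0 < c) {δ : ℝ} (hδ : 0 < δ)
    (hδ1 : δ ≤ 1) : ENNReal.ofReal (1 - δ) ≤ μ {ω | X ω < √(2 * c * log (1 / δ))} := by
  set ε := √(2 * c * log (1 / δ))
  have hL : 0 ≤ log (1 / δ) := log_nonneg (one_le_one_div hδ hδ1)
  have htail : μ {ω | ε ≤ X ω} ≤ ENNReal.ofReal δ := by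
    rw [← ofReal_measureReal]
    refine ENNReal.ofReal_le_ofReal ((h.measure_ge_le (sqrt_nonneg _)).trans_eq ?_)
    rw [sq_sqrt (by positivity), one_div, log_inv]
    field_simp
    exact exp_log hδ
  have hcompl : {ω | X ω < ε}ᶜ = {ω | ε ≤ X ω} := by ext; simp
  calc ENNReal.ofReal (1 - δ) = 1 - ENNReal.ofReal δ := by
        rw [ENNReal.ofReal_sub _ hδ.le, ENNReal.ofReal_one]
    _ ≤ 1 - μ {ω | ε ≤ X ω} := tsub_le_tsub_left htail 1
    _ ≤ μ {ω | X ω < ε} := by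
        rw [tsub_le_iff_right, ← hcompl, ← measure_univ (μ := μ)]
        exact measure_univ_le_add_compl _

end Azuma

section StochasticSwapRegret

variable {ι Ω : Type*} {m m0 : MeasurableSpace Ω} {P : Measure Ω} {ℱ : Filtration ℕ m0}
  {g v : ℕ → Ω → ι → ℝ} {t : ℕ}

lemma measurable_condExp_pi : Measurable[ℱ t] fun ω i => P[fun ω' => g t ω' i|ℱ t] ω :=
  @measurable_pi_lambda _ _ _ (ℱ t) _ _ fun _ => stronglyMeasurable_condExp.measurable

variable [Fintype ι]

lemma condExp_dotProduct_of_stronglyMeasurable [IsFiniteMeasure P] (hm : m ≤ m0)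
    {g d : Ω → ι → ℝ} {C : ℝ} (hg : ∀ i, Integrable (fun ω => g ω i) P)
    (hd : ∀ i, StronglyMeasurable[m] fun ω => d ω i) (hdC : ∀ i ω, ‖d ω i‖ ≤ C) :
    P[fun ω => g ω ⬝ᵥ d ω|m] =ᵐ[P] fun ω => (fun i => P[fun ω' => g ω' i|m] ω) ⬝ᵥ d ω := by
  have hsum : (fun ω => g ω ⬝ᵥ d ω) = ∑ i, (fun ω => d ω i) * fun ω => g ω i := by
    ext ω; simp [dotProduct, mul_comm]
  have hpull : ∀ᵐ ω ∂P, ∀ i, P[(fun ω => d ω i) * fun ω => g ω i|m] ω =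
      d ω i * P[fun ω' => g ω' i|m] ω := ae_all_iff.2 fun i =>
    condExp_stronglyMeasurable_mul_of_bound hm (hd i) (hg i) C (ae_of_all _ (hdC i))
  rw [hsum]
  filter_upwards [condExp_finsetSum (s := univ) (f := fun i => (fun ω => d ω i) * fun ω => g ω i)
    (fun i _ => (hg i).bdd_mul ((hd i).mono hm).aestronglyMeasurable (ae_of_all _ (hdC i))) m,
    hpull] with ω h₁ h₂
  rw [h₁, Finset.sum_apply]
  exact sum_congr rfl fun i _ => (h₂ i).trans (mul_comm _ _)

variable {M' : Matrix ι ι ℝ} {B : ℝ}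

lemma Measurable.swapGain {mΩ : MeasurableSpace Ω} {a b : Ω → ι → ℝ} (ha : Measurable a)
    (hb : Measurable b) : Measurable fun ω => swapGain M' (a ω) (b ω) := by
  have : Continuous fun p : (ι → ℝ) × (ι → ℝ) => _root_.swapGain M' p.1 p.2 := by
    unfold _root_.swapGain; fun_prop
  exact this.measurable.comp (ha.prodMk hb)

lemma ae_abs_condExp_le (hgB : ∀ᵐ ω ∂P, ∀ i, |g t ω i| ≤ B) :
    ∀ᵐ ω ∂P, ∀ i, |P[fun ω' => g t ω' i|ℱ t] ω| ≤ B :=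
  ae_all_iff.2 fun i => ae_bdd_abs_condExp_of_ae_bdd_abs (hgB.mono fun _ h => h i)

noncomputable def condSwapGain (P : Measure Ω) (ℱ : Filtration ℕ m0) (M' : Matrix ι ι ℝ)
    (g v : ℕ → Ω → ι → ℝ) (t : ℕ) (ω : Ω) : ℝ :=
  swapGain M' (fun i => P[fun ω' => g t ω' i|ℱ t] ω) (v t ω)

noncomputable def swapGainNoise (P : Measure Ω) (ℱ : Filtration ℕ m0) (M' : Matrix ι ι ℝ)
    (g v : ℕ → Ω → ι → ℝ) (t : ℕ) (ω : Ω) : ℝ :=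
  condSwapGain P ℱ M' g v t ω - swapGain M' (g t ω) (v t ω)

lemma measurable_condSwapGain (hv : Measurable[ℱ t] (v t)) :
    Measurable[ℱ t] (condSwapGain P ℱ M' g v t) :=
  measurable_condExp_pi.swapGain hv

lemma stronglyMeasurable_swapGainNoise (hg : Measurable[ℱ (t + 1)] (g t))
    (hv : Measurable[ℱ t] (v t)) : StronglyMeasurable[ℱ (t + 1)] (swapGainNoise P ℱ M' g v t) :=
  (((measurable_condSwapGain hv).mono (ℱ.mono t.le_succ) le_rfl).sub
    (hg.swapGain (hv.mono (ℱ.mono t.le_succ) le_rfl))).stronglyMeasurable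

variable [DecidableEq ι]

lemma ae_abs_condSwapGain_le (hM' : M' ∈ colStochastic ℝ ι) (hv : ∀ ω, v t ω ∈ stdSimplex ℝ ι)
    (hgB : ∀ᵐ ω ∂P, ∀ i, |g t ω i| ≤ B) : ∀ᵐ ω ∂P, |condSwapGain P ℱ M' g v t ω| ≤ 2 * B := by
  filter_upwards [ae_abs_condExp_le hgB] with ω hω using abs_swapGain_le hM' (hv ω) hω

lemma abs_swapGainNoise_le (hM' : M' ∈ colStochastic ℝ ι) (hv : ∀ ω, v t ω ∈ stdSimplex ℝ ι)
    (hgB : ∀ᵐ ω ∂P, ∀ i, |g t ω i| ≤ B) : ∀ᵐ ω ∂P, |swapGainNoise P ℱ M' g v t ω| ≤ 4 * B := by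
  filter_upwards [hgB, ae_abs_condSwapGain_le (ℱ := ℱ) hM' hv hgB] with ω hω hĝ
  rw [swapGainNoise]
  linarith [abs_sub (condSwapGain P ℱ M' g v t ω) (swapGain M' (g t ω) (v t ω)),
    abs_swapGain_le hM' (hv ω) hω]

lemma condExp_swapGainNoise [IsFiniteMeasure P] (hM' : M' ∈ colStochastic ℝ ι)
    (hg : Measurable[ℱ (t + 1)] (g t)) (hv : Measurable[ℱ t] (v t))
    (hvS : ∀ ω, v t ω ∈ stdSimplex ℝ ι) (hgB : ∀ᵐ ω ∂P, ∀ i, |g t ω i| ≤ B) :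
    P[swapGainNoise P ℱ M' g v t|ℱ t] =ᵐ[P] 0 := by
  have hg' : Measurable (g t) := hg.mono (ℱ.le _) le_rfl
  have hv' : Measurable (v t) := hv.mono (ℱ.le _) le_rfl
  have hgi : ∀ i, Integrable (fun ω => g t ω i) P := fun i =>
    Integrable.of_bound (by fun_prop) B (hgB.mono fun ω h => (norm_eq_abs _).trans_le (h i))
  have hpred : Integrable (condSwapGain P ℱ M' g v t) P :=
    Integrable.of_bound ((measurable_condSwapGain hv).mono (ℱ.le _) le_rfl).aestronglyMeasurable
      (2 * B) <| by
        filter_upwards [ae_abs_condSwapGain_le hM' hvS hgB] with ω hω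
        exact (norm_eq_abs _).trans_le hω
  have hreal : Integrable (fun ω => swapGain M' (g t ω) (v t ω)) P :=
    Integrable.of_bound (hg'.swapGain hv').aestronglyMeasurable (2 * B) <| by
      filter_upwards [hgB] with ω hω
      exact (norm_eq_abs _).trans_le (abs_swapGain_le hM' (hvS ω) hω)
  have hproj : P[fun ω => swapGain M' (g t ω) (v t ω)|ℱ t] =ᵐ[P] condSwapGain P ℱ M' g v t :=
    condExp_dotProduct_of_stronglyMeasurable (ℱ.le t) hgi
      (fun i => ((by fun_prop : Continuous fun x : ι → ℝ => (M' *ᵥ x - x) i).measurable.comp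
        hv).stronglyMeasurable)
      (fun i ω => (norm_eq_abs _).trans_le (abs_mulVec_sub_le_one hM' (hvS ω) i))
  filter_upwards [condExp_sub hpred hreal (ℱ t), hproj] with ω h₁ h₂
  rw [show swapGainNoise P ℱ M' g v t = _ - _ from rfl, h₁, Pi.sub_apply, h₂,
    condExp_of_stronglyMeasurable (ℱ.le t) (measurable_condSwapGain hv).stronglyMeasurable hpred]
  simp

theorem ofReal_one_sub_le_measure_sum_swapGainNoise_lt [IsProbabilityMeasure P] {T : ℕ}
    (hM' : M' ∈ colStochastic ℝ ι) (hB : 0 < B) (hT : 0 < T)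
    (hg : ∀ t, Measurable[ℱ (t + 1)] (g t)) (hv : ∀ t, Measurable[ℱ t] (v t))
    (hvS : ∀ t < T, ∀ ω, v t ω ∈ stdSimplex ℝ ι) (hgB : ∀ t < T, ∀ᵐ ω ∂P, ∀ i, |g t ω i| ≤ B)
    {δ : ℝ} (hδ : 0 < δ) (hδ1 : δ ≤ 1) :
    ENNReal.ofReal (1 - δ) ≤ P {ω | ∑ t ∈ range T, swapGainNoise P ℱ M' g v t ω <
      4 * B * √(2 * T * log (1 / δ))} := by
  set c : ℝ≥0 := ⟨4 * B, by positivity⟩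
  have hc : (c : ℝ) = 4 * B := rfl
  have hc₀ : 0 < c := NNReal.coe_pos.1 (hc ▸ by positivity)
  have hZ := hasSubgaussianMGF_sum_of_condExp_eq_zero hc₀
    (fun t _ => stronglyMeasurable_swapGainNoise (hg t) (hv t))
    (fun t ht => abs_swapGainNoise_le hM' (hvS t ht) (hgB t ht))
    (fun t ht => condExp_swapGainNoise hM' (hg t) (hv t) (hvS t ht) (hgB t ht))
  convert hZ.ofReal_one_sub_le_measure_lt (mul_pos (by exact_mod_cast hT) (pow_pos hc₀ 2)) hδ
    hδ1 using 5
  rw [NNReal.coe_mul, NNReal.coe_pow, hc, NNReal.coe_natCast,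
    show 2 * (T * (4 * B) ^ 2) * log (1 / δ) = (4 * B) ^ 2 * (2 * T * log (1 / δ)) by ring,
    sqrt_mul (sq_nonneg (4 * B)), sqrt_sq (by positivity)]

lemma ae_sub_le_condSwapGain {f : ℕ → (ι → ℝ) → ℝ} {T : ℕ} (hM' : M' ∈ colStochastic ℝ ι)
    (hvS : ∀ t < T, ∀ ω, v t ω ∈ stdSimplex ℝ ι)
    (hsuper : ∀ t < T, ∀ᵐ ω ∂P, ∀ y ∈ stdSimplex ℝ ι,
      f t y ≤ f t (v t ω) + ∑ i, (P[fun ω' => g t ω' i|ℱ t]) ω * (y i - v t ω i)) :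
    ∀ᵐ ω ∂P, ∀ t < T, f t (M' *ᵥ v t ω) - f t (v t ω) ≤ condSwapGain P ℱ M' g v t ω := by
  refine (Filter.eventually_all_finite (Set.finite_Iio T)).2 fun t ht => ?_
  filter_upwards [hsuper t ht] with ω hω
  exact sub_le_iff_le_add'.2 (hω _ (mulVec_mem_stdSimplex hM' (hvS t ht ω)))

lemma ae_sum_sub_le {f : ℕ → (ι → ℝ) → ℝ} {T : ℕ} (hM' : M' ∈ colStochastic ℝ ι)
    (hvS : ∀ t < T, ∀ ω, v t ω ∈ stdSimplex ℝ ι)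
    (hsuper : ∀ t < T, ∀ᵐ ω ∂P, ∀ y ∈ stdSimplex ℝ ι,
      f t y ≤ f t (v t ω) + ∑ i, (P[fun ω' => g t ω' i|ℱ t]) ω * (y i - v t ω i))
    (hgB : ∀ t < T, ∀ᵐ ω ∂P, ∀ i, |g t ω i| ≤ B) :
    ∀ᵐ ω ∂P, ∑ t ∈ range T, (f t (M' *ᵥ v t ω) - f t (v t ω)) ≤ T * (2 * B) := by
  filter_upwards [ae_sub_le_condSwapGain hM' hvS hsuper, (Filter.eventually_all_finite
    (Set.finite_Iio T)).2 fun t ht => ae_abs_condSwapGain_le (ℱ := ℱ) hM' (hvS t ht) (hgB t ht)]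
    with ω h₁ h₂
  calc _ ≤ ∑ _t ∈ range T, 2 * B := sum_le_sum fun t ht =>
        (h₁ t (mem_range.1 ht)).trans (le_of_abs_le (h₂ t (mem_range.1 ht)))
    _ = T * (2 * B) := by rw [sum_const, card_range, nsmul_eq_mul]

theorem ofReal_one_sub_le_measure_sum_sub_lt [IsProbabilityMeasure P] [Nonempty ι]
    {f : ℕ → (ι → ℝ) → ℝ} {M : ℕ → Ω → Matrix ι ι ℝ} {η δ : ℝ} {T : ℕ}
    (hM' : M' ∈ colStochastic ℝ ι) (hinit : ∀ ω i j, M 0 ω i j = 1 / Fintype.card ι)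
    (hupd : ∀ t < T, ∀ ω i j, M (t + 1) ω i j =
      hedgeUpdate (fun k => M t ω k j) (fun k => η * (g t ω k * v t ω j)) i)
    (hg : ∀ t, Measurable[ℱ (t + 1)] (g t)) (hv : ∀ t, Measurable[ℱ t] (v t))
    (hvS : ∀ t < T, ∀ ω, v t ω ∈ stdSimplex ℝ ι) (hstat : ∀ t < T, ∀ ω, M t ω *ᵥ v t ω = v t ω)
    (hsuper : ∀ t < T, ∀ᵐ ω ∂P, ∀ y ∈ stdSimplex ℝ ι,
      f t y ≤ f t (v t ω) + ∑ i, (P[fun ω' => g t ω' i|ℱ t]) ω * (y i - v t ω i))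
    (hgB : ∀ t < T, ∀ᵐ ω ∂P, ∀ i, |g t ω i| ≤ B) (hB : 0 < B)
    (hK : 0 < Fintype.card ι * log (Fintype.card ι))
    (hKT : Fintype.card ι * log (Fintype.card ι) ≤ T)
    (hη : η = √(Fintype.card ι * log (Fintype.card ι) / (T * B ^ 2)))
    (hδ : 0 < δ) (hδ1 : δ ≤ 1) :
    ENNReal.ofReal (1 - δ) ≤ P {ω | ∑ t ∈ range T, (f t (M' *ᵥ v t ω) - f t (v t ω)) <
      2 * B * √(T * (Fintype.card ι * log (Fintype.card ι))) + 4 * B * √(2 * T * log (1 / δ))} := by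
  have hT : 0 < T := by exact_mod_cast hK.trans_le hKT
  have hMW : ∀ᵐ ω ∂P, ∑ t ∈ range T, swapGain M' (g t ω) (v t ω) ≤
      2 * B * √(T * (Fintype.card ι * log (Fintype.card ι))) := by
    filter_upwards [(Filter.eventually_all_finite (Set.finite_Iio T)).2 hgB] with ω hω
    exact sum_swapGain_le_of_hedgeUpdate hM' (hinit ω) (fun t ht => hupd t ht ω)
      (fun t ht => hvS t ht ω) (fun t ht => hstat t ht ω) hω hB hK hKT hη
  refine (ofReal_one_sub_le_measure_sum_swapGainNoise_lt hM' hB hT hg hv hvS hgB hδ hδ1).trans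
    (measure_mono_ae ?_)
  filter_upwards [ae_sub_le_condSwapGain hM' hvS hsuper, hMW] with ω hgap hmw hnoise
  calc _ ≤ ∑ t ∈ range T, condSwapGain P ℱ M' g v t ω :=
        sum_le_sum fun t ht => hgap t (mem_range.1 ht)
    _ = ∑ t ∈ range T, swapGain M' (g t ω) (v t ω) +
          ∑ t ∈ range T, swapGainNoise P ℱ M' g v t ω := by
        rw [← sum_add_distrib]; simp only [swapGainNoise, add_sub_cancel]
    _ < _ := add_lt_add_of_le_of_lt hmw hnoise

end StochasticSwapRegret

lemma two_mul_sqrt_add_le {B K L T : ℝ} (hB : 0 ≤ B) (hK : 1 ≤ K) (hL : 0 ≤ L) (hT : 0 < T) :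
    2 * B * √(T * K) + 4 * B * √(2 * T * L) ≤ T * (2 * B * √(2 * K * (1 + 16 * L) / T)) := by
  have hsqrt : T * √(2 * K * (1 + 16 * L) / T) = √(2 * K * (1 + 16 * L) * T) := by
    rw [eq_comm, sqrt_eq_iff_mul_self_eq (by positivity) (by positivity)]
    ring_nf
    rw [sq_sqrt (by positivity)]
    field_simp
  have hsum : √(T * K) + 2 * √(2 * T * L) ≤ √(2 * K * (1 + 16 * L) * T) := by
    apply le_sqrt_of_sq_le
    nlinarith [sq_sqrt (by positivity : 0 ≤ T * K), sq_sqrt (by positivity : 0 ≤ 2 * T * L),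
      sq_nonneg (√(T * K) - 2 * √(2 * T * L)), mul_nonneg (mul_nonneg hT.le hL) (sub_nonneg.2 hK)]
  calc 2 * B * √(T * K) + 4 * B * √(2 * T * L) = 2 * B * (√(T * K) + 2 * √(2 * T * L)) := by ring
    _ ≤ 2 * B * √(2 * K * (1 + 16 * L) * T) := by gcongr
    _ = _ := by rw [← hsqrt]; ring

lemma one_le_natCast_mul_log {n : ℕ} (hn : 2 ≤ n) : 1 ≤ (n : ℝ) * log n := by
  have h2 : (2 : ℝ) ≤ n := by exact_mod_cast hn
  nlinarith [log_le_log two_pos h2, log_two_gt_d9]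

lemma pos_and_lt_of_not_le_mul_sqrt_div {B X T : ℝ} (hB : 0 ≤ B) (hT : 0 < T)
    (h : ¬2 * B ≤ 2 * B * √(X / T)) : 0 < B ∧ X < T := by
  have hB' : 0 < B := hB.lt_of_ne fun h₀ => h (by simp [← h₀])
  have hs : √(X / T) < 1 := (mul_lt_iff_lt_one_right (by positivity)).1 (not_le.1 h)
  rw [sqrt_lt' one_pos, one_pow, div_lt_one hT] at hs
  exact ⟨hB', hs⟩

lemma ofReal_one_sub_le_of_ae {Ω : Type*} {m0 : MeasurableSpace Ω} {P : Measure Ω}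
    [IsProbabilityMeasure P] {δ : ℝ} (hδ : 0 ≤ δ) {p : Ω → Prop} (h : ∀ᵐ ω ∂P, p ω) :
    ENNReal.ofReal (1 - δ) ≤ P {ω | p ω} :=
  calc ENNReal.ofReal (1 - δ) ≤ P Set.univ := by simp [hδ]
    _ ≤ P {ω | p ω} := measure_mono_ae (h.mono fun _ hω _ => hω)

lemma one_div_mul_sum_sub_le {T : ℕ} (hT : 0 < T) {a b : ℕ → ℝ} {R : ℝ}
    (h : ∑ t ∈ range T, (a t - b t) ≤ T * R) :
    1 / (T : ℝ) * ∑ t ∈ range T, a t - 1 / (T : ℝ) * ∑ t ∈ range T, b t ≤ R := by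
  rwa [← mul_sub, ← sum_sub_distrib, one_div, inv_mul_le_iff₀ (by positivity)]

theorem stochastic_swap_regret_bound_general
    {mt : ℕ}
    {Ω : Type*} {m0 : MeasurableSpace Ω} (P : Measure Ω) [IsProbabilityMeasure P]
    (ℱ : Filtration ℕ m0)
    (f : ℕ → (Fin mt → ℝ) → ℝ)
    (Bg δ : ℝ) (hδ : 0 < δ)
    (T : ℕ) (hT : 0 < T)
    (η : ℝ) (hη : η = Real.sqrt ((mt : ℝ) * Real.log mt / (T * Bg ^ 2)))
    (lams : ℕ → Ω → Fin mt → ℝ)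
    (gs : ℕ → Ω → Fin mt → ℝ)
    (Ms : ℕ → Ω → Fin mt → Fin mt → ℝ)
    (hinit : ∀ ω i j, Ms 0 ω i j = 1 / (mt : ℝ))
    -- adaptedness
    (hlammeas : ∀ t, Measurable[ℱ t] (lams t))
    (hgmeas : ∀ t, Measurable[ℱ (t + 1)] (gs t))
    -- `λ^(t)` is a stationary distribution of `M^(t)`
    (hstat : ∀ t < T, ∀ ω, lams t ω ∈ stdSimplex ℝ (Fin mt) ∧
      ∀ i, ∑ j, Ms t ω i j * lams t ω j = lams t ω i)
    -- the conditional expectation of `ĝ^(t)` is a supergradient of `f_t`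
    -- at `λ^(t)`
    (hsuper : ∀ t < T, ∀ᵐ ω ∂P, ∀ y ∈ stdSimplex ℝ (Fin mt),
      f t y ≤ f t (lams t ω)
        + ∑ i, (P[fun ω' => gs t ω' i|ℱ t]) ω * (y i - lams t ω i))
    -- almost-sure `∞`-norm bound
    (hgb : ∀ t < T, ∀ᵐ ω ∂P, ∀ i, |gs t ω i| ≤ Bg)
    -- multiplicative update with `A^(t) = ĝ^(t) (λ^(t))ᵀ`, then column
    -- normalization
    (hupdate : ∀ t < T, ∀ ω i j,
      Ms (t + 1) ω i j = (Ms t ω i j * Real.exp (η * (gs t ω i * lams t ω j)))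
        / ∑ k, Ms t ω k j * Real.exp (η * (gs t ω k * lams t ω j))) :
    ∀ M' : Fin mt → Fin mt → ℝ,
      (∀ j, (fun i => M' i j) ∈ stdSimplex ℝ (Fin mt)) →
      ENNReal.ofReal (1 - δ) ≤ P {ω |
        (1 / (T : ℝ)) * ∑ t ∈ Finset.range T,
            f t (fun i => ∑ j, M' i j * lams t ω j)
          - (1 / (T : ℝ)) * ∑ t ∈ Finset.range T, f t (lams t ω)
        ≤ 2 * Bg * Real.sqrt (2 * ((mt : ℝ) * Real.log mt)
            * (1 + 16 * Real.log (1 / δ)) / T)} := by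
  intro M' hM'
  replace hM' : M' ∈ colStochastic ℝ (Fin mt) :=
    mem_colStochastic_iff_sum.2 ⟨fun i j => (hM' j).1 i, fun j => (hM' j).2⟩
  have hvS : ∀ t < T, ∀ ω, lams t ω ∈ stdSimplex ℝ (Fin mt) := fun t ht ω => (hstat t ht ω).1
  rcases le_or_gt 1 δ with hδ1 | hδ1
  · simp [ENNReal.ofReal_eq_zero.2 (sub_nonpos.2 hδ1)]
  set K : ℝ := mt * log mt
  set L : ℝ := log (1 / δ)
  set R : ℝ := 2 * Bg * √(2 * K * (1 + 16 * L) / T)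
  refine le_trans ?_ (measure_mono (s := {ω | ∑ t ∈ range T,
    (f t (M' *ᵥ lams t ω) - f t (lams t ω)) ≤ T * R}) fun ω => one_div_mul_sum_sub_le hT)
  rcases le_or_gt mt 1 with hmt | hmt
  · have : Subsingleton (Fin mt) := Fin.subsingleton_iff_le_one.2 hmt
    have hK : K = 0 := by rcases Nat.le_one_iff_eq_zero_or_eq_one.1 hmt with h | h <;> simp [K, h]
    exact ofReal_one_sub_le_of_ae hδ.le
      (ae_of_all _ fun ω => by simp [mulVec_eq_self_of_subsingleton hM', R, hK])
  have hB₀ : 0 ≤ Bg := by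
    obtain ⟨ω, hω⟩ := (hgb 0 hT).exists
    exact (abs_nonneg _).trans (hω ⟨0, by omega⟩)
  by_cases hR : 2 * Bg ≤ R
  · exact ofReal_one_sub_le_of_ae hδ.le ((ae_sum_sub_le hM' hvS hsuper hgb).mono fun ω hω =>
      hω.trans (by gcongr))
  obtain ⟨hB, hKT⟩ := pos_and_lt_of_not_le_mul_sqrt_div hB₀ (by positivity) hR
  have hK := one_le_natCast_mul_log hmt
  have hL : 0 ≤ L := log_nonneg (one_le_one_div hδ hδ1.le)
  have : Nonempty (Fin mt) := ⟨⟨0, by omega⟩⟩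
  refine (ofReal_one_sub_le_measure_sum_sub_lt (f := f) hM'
    (fun ω i j => by rw [Fintype.card_fin]; exact hinit ω i j) hupdate hgmeas hlammeas hvS
    (fun t ht ω => funext (hstat t ht ω).2) hsuper hgb hB
    (by simp only [Fintype.card_fin]; linarith)
    (by rw [Fintype.card_fin]; nlinarith) (by rwa [Fintype.card_fin]) hδ hδ1.le).trans
    (measure_mono fun ω hω => ?_)
  rw [Set.mem_ofPred_eq, Fintype.card_fin] at hω
  exact hω.le.trans (two_mul_sqrt_add_le hB₀ hK hL (by positivity))

/-- **Stochastic swap-regret bound** (Lemma C.13).  Let `Λ = Δ^{m̃}` and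
`f₁, …, f_T` be concave on `Λ`.  At each step the player plays a stationary
distribution `λ^(t)` of the left-stochastic matrix `M^(t)`, and updates `M`
multiplicatively using `A^(t) = ĝ^(t) (λ^(t))ᵀ` followed by column
normalization, where `ĝ^(t)` is a stochastic supergradient (adapted, bounded
by `B_ĝ` in `∞`-norm almost surely, whose conditional expectation given the
past is a supergradient of `f_t` at `λ^(t)`), with step size
`η = √(m̃ ln m̃ / (T B_ĝ²))`.  Then for every left-stochastic `M*`, with
probability at least `1 − δ`,
`(1/T) ∑ₜ fₜ(M* λ^(t)) − (1/T) ∑ₜ fₜ(λ^(t))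
  ≤ 2 B_ĝ √(2 (m̃ ln m̃)(1 + 16 ln(1/δ)) / T)`. -/
theorem stochastic_swap_regret_bound
    {mt : ℕ}
    {Ω : Type*} {m0 : MeasurableSpace Ω} (P : Measure Ω) [IsProbabilityMeasure P]
    (ℱ : Filtration ℕ m0)
    (f : ℕ → (Fin mt → ℝ) → ℝ)
    (hconc : ∀ t, ConcaveOn ℝ (stdSimplex ℝ (Fin mt)) (f t))
    (Bg δ : ℝ) (hδ : 0 < δ)
    (T : ℕ) (hT : 0 < T)
    (η : ℝ) (hη : η = Real.sqrt ((mt : ℝ) * Real.log mt / (T * Bg ^ 2)))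
    (lams : ℕ → Ω → Fin mt → ℝ)
    (gs : ℕ → Ω → Fin mt → ℝ)
    (Ms : ℕ → Ω → Fin mt → Fin mt → ℝ)
    (hinit : ∀ ω i j, Ms 0 ω i j = 1 / (mt : ℝ))
    -- adaptedness
    (hMmeas : ∀ t, Measurable[ℱ t] (Ms t))
    (hlammeas : ∀ t, Measurable[ℱ t] (lams t))
    (hgmeas : ∀ t, Measurable[ℱ (t + 1)] (gs t))
    -- `λ^(t)` is a stationary distribution of `M^(t)`
    (hstat : ∀ t < T, ∀ ω, lams t ω ∈ stdSimplex ℝ (Fin mt) ∧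
      ∀ i, ∑ j, Ms t ω i j * lams t ω j = lams t ω i)
    -- the conditional expectation of `ĝ^(t)` is a supergradient of `f_t`
    -- at `λ^(t)`
    (hsuper : ∀ t < T, ∀ᵐ ω ∂P, ∀ y ∈ stdSimplex ℝ (Fin mt),
      f t y ≤ f t (lams t ω)
        + ∑ i, (P[fun ω' => gs t ω' i|ℱ t]) ω * (y i - lams t ω i))
    -- almost-sure `∞`-norm bound
    (hgb : ∀ t < T, ∀ᵐ ω ∂P, ∀ i, |gs t ω i| ≤ Bg)
    -- multiplicative update with `A^(t) = ĝ^(t) (λ^(t))ᵀ`, then column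
    -- normalization
    (hupdate : ∀ t < T, ∀ ω i j,
      Ms (t + 1) ω i j = (Ms t ω i j * Real.exp (η * (gs t ω i * lams t ω j)))
        / ∑ k, Ms t ω k j * Real.exp (η * (gs t ω k * lams t ω j))) :
    ∀ M' : Fin mt → Fin mt → ℝ,
      (∀ j, (fun i => M' i j) ∈ stdSimplex ℝ (Fin mt)) →
      ENNReal.ofReal (1 - δ) ≤ P {ω |
        (1 / (T : ℝ)) * ∑ t ∈ Finset.range T,
            f t (fun i => ∑ j, M' i j * lams t ω j)
          - (1 / (T : ℝ)) * ∑ t ∈ Finset.range T, f t (lams t ω)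
        ≤ 2 * Bg * Real.sqrt (2 * ((mt : ℝ) * Real.log mt)
            * (1 + 16 * Real.log (1 / δ)) / T)} :=
  stochastic_swap_regret_bound_general P ℱ f Bg δ hδ T hT η hη lams gs Ms hinit hlammeas hgmeas
    hstat hsuper hgb hupdate
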